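/- Let n ≥ 1, let 0 < s < 1 and p > 1 be real numbers, and let ε > 0. Let u, v : ℝⁿ → ℝ be measurable functions with v ≥ 0 everywhere and v(y) = 0 for every y with u(y) ≤ ε. Assume that the functions (x, y) ↦ Φ_p((u(x) − ε)⁺ − (u(y) − ε)⁺)·(v(x) − v(y)) / |x − y|^{n+sp} and (x, y) ↦ Φ_p(u(x) − u(y))·(v(x) − v(y)) / |x − y|^{n+sp} are Lebesgue integrable on ℝⁿ × ℝⁿ. Then ∬_{ℝⁿ×ℝⁿ} Φ_p((u(x) − ε)⁺ − (u(y) − ε)⁺)·(v(x) − v(y)) / |x − y|^{n+sp} dx dy ≤ ∬_{ℝⁿ×ℝⁿ} Φ_p(u(x) − u(y))·(v(x) − v(y)) / |x − y|^{n+sp} dx dy. -/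

import Mathlib

/-!
`Φ_p` is odd and increasing on `[0, ∞)`, hence monotone.
Writing `a = u(x) − ε`, `b = u(y) − ε`, the integrands differ only where exactly one of `a`, `b`
is positive: if `a ≤ 0 < b` then `v(x) = 0`, `a⁺ − b⁺ = −b ≥ a − b`, and the common factor
`v(x) − v(y) = −v(y)` is nonpositive; the other case is symmetric. So the truncated integrand is
pointwise below the untruncated one, and the integrals compare by monotonicity.
-/

open MeasureTheory

/-- `Φ_p(t) = |t|^{p-2} t`. -/
noncomputable def Phi (p t : ℝ) : ℝ := |t| ^ (p - 2) * t

lemma Phi_neg (p t : ℝ) : Phi p (-t) = -Phi p t := by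
  simp [Phi, abs_neg, mul_neg]

lemma Phi_eq_rpow_of_nonneg {p t : ℝ} (hp : 1 < p) (ht : 0 ≤ t) : Phi p t = t ^ (p - 1) := by
  rw [Phi, abs_of_nonneg ht, ← Real.rpow_add_one' ht (by linarith)]
  ring_nf

lemma Phi_monotone {p : ℝ} (hp : 1 < p) : Monotone (Phi p) := by
  refine monotone_of_odd_of_monotoneOn_nonneg (Phi_neg p) fun x hx y hy hxy => ?_
  rw [Phi_eq_rpow_of_nonneg hp hx, Phi_eq_rpow_of_nonneg hp hy]
  exact Real.rpow_le_rpow hx hxy (by linarith)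

lemma Monotone.apply_max_sub_max_mul_sub_le {φ : ℝ → ℝ} (hφ : Monotone φ) {a b c d : ℝ}
    (hc : 0 ≤ c) (hd : 0 ≤ d) (hac : a ≤ 0 → c = 0) (hbd : b ≤ 0 → d = 0) :
    φ (max a 0 - max b 0) * (c - d) ≤ φ (a - b) * (c - d) := by
  rcases le_or_gt a 0 with ha | ha <;> rcases le_or_gt b 0 with hb | hb
  · simp [hac ha, hbd hb]
  · rw [hac ha, max_eq_right ha, max_eq_left hb.le]
    exact mul_le_mul_of_nonpos_right (hφ (by linarith)) (by linarith)
  · rw [hbd hb, max_eq_left ha.le, max_eq_right hb]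
    exact mul_le_mul_of_nonneg_right (hφ (by linarith)) (by linarith)
  · rw [max_eq_left ha.le, max_eq_left hb.le]

theorem fractional_pLaplacian_truncation_general (n : ℕ) (s p ε : ℝ)
    (hp : 1 < p)
    (u v : EuclideanSpace ℝ (Fin n) → ℝ)
    (hv0 : ∀ y, 0 ≤ v y) (hvsupp : ∀ y, u y ≤ ε → v y = 0)
    (hint1 : Integrable (fun q : EuclideanSpace ℝ (Fin n) × EuclideanSpace ℝ (Fin n) =>
      Phi p (max (u q.1 - ε) 0 - max (u q.2 - ε) 0) * (v q.1 - v q.2) /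
        ‖q.1 - q.2‖ ^ ((n : ℝ) + s * p)))
    (hint2 : Integrable (fun q : EuclideanSpace ℝ (Fin n) × EuclideanSpace ℝ (Fin n) =>
      Phi p (u q.1 - u q.2) * (v q.1 - v q.2) / ‖q.1 - q.2‖ ^ ((n : ℝ) + s * p))) :
    (∫ q : EuclideanSpace ℝ (Fin n) × EuclideanSpace ℝ (Fin n),
      Phi p (max (u q.1 - ε) 0 - max (u q.2 - ε) 0) * (v q.1 - v q.2) /
        ‖q.1 - q.2‖ ^ ((n : ℝ) + s * p)) ≤
    ∫ q : EuclideanSpace ℝ (Fin n) × EuclideanSpace ℝ (Fin n),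
      Phi p (u q.1 - u q.2) * (v q.1 - v q.2) / ‖q.1 - q.2‖ ^ ((n : ℝ) + s * p) := by
  refine integral_mono hint1 hint2 fun q => ?_
  have hnum := (Phi_monotone hp).apply_max_sub_max_mul_sub_le (hv0 q.1) (hv0 q.2)
    (fun h => hvsupp q.1 (sub_nonpos.mp h)) (fun h => hvsupp q.2 (sub_nonpos.mp h))
  rw [sub_sub_sub_cancel_right] at hnum
  exact div_le_div_of_nonneg_right hnum (by positivity)

/-- The weak form of the fractional p-Laplacian of the truncation `(u − ε)⁺`, tested against
nonnegative functions `v` supported in `{u > ε}`, is dominated by the weak form of the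
fractional p-Laplacian of `u`. -/
theorem fractional_pLaplacian_truncation (n : ℕ) (hn : 1 ≤ n) (s p ε : ℝ)
    (hs0 : 0 < s) (hs1 : s < 1) (hp : 1 < p) (hε : 0 < ε)
    (u v : EuclideanSpace ℝ (Fin n) → ℝ) (hu : Measurable u) (hv : Measurable v)
    (hv0 : ∀ y, 0 ≤ v y) (hvsupp : ∀ y, u y ≤ ε → v y = 0)
    (hint1 : Integrable (fun q : EuclideanSpace ℝ (Fin n) × EuclideanSpace ℝ (Fin n) =>
      Phi p (max (u q.1 - ε) 0 - max (u q.2 - ε) 0) * (v q.1 - v q.2) /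
        ‖q.1 - q.2‖ ^ ((n : ℝ) + s * p)))
    (hint2 : Integrable (fun q : EuclideanSpace ℝ (Fin n) × EuclideanSpace ℝ (Fin n) =>
      Phi p (u q.1 - u q.2) * (v q.1 - v q.2) / ‖q.1 - q.2‖ ^ ((n : ℝ) + s * p))) :
    (∫ q : EuclideanSpace ℝ (Fin n) × EuclideanSpace ℝ (Fin n),
      Phi p (max (u q.1 - ε) 0 - max (u q.2 - ε) 0) * (v q.1 - v q.2) /
        ‖q.1 - q.2‖ ^ ((n : ℝ) + s * p)) ≤
    ∫ q : EuclideanSpace ℝ (Fin n) × EuclideanSpace ℝ (Fin n),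
      Phi p (u q.1 - u q.2) * (v q.1 - v q.2) / ‖q.1 - q.2‖ ^ ((n : ℝ) + s * p) :=
  fractional_pLaplacian_truncation_general n s p ε hp u v hv0 hvsupp hint1 hint2
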